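/- arXiv:1609.04589 — 6 statements merged into one kernel-verified Lean document; each statement's English description precedes it below -/
import Mathlib

section
/- Let ω > 0 and c ∈ ℝ with c² < 4ω. Define f(ω,c) = 8√ω · arctan(√((2√ω + c)/(2√ω - c))) - 2√(4ω - c²). Then ∂f/∂c = 2(c + 2√ω)/√(4ω - c²), which is strictly positive for -2√ω < c < 2√ω. -/
open Real

theorem hasDerivAt_sqrt_sub_sq {a c : ℝ} (hc : c ^ 2 < a) :
    HasDerivAt (fun x : ℝ => √(a - x ^ 2)) (-c / √(a - c ^ 2)) c := by
  refine (((hasDerivAt_pow 2 c).const_sub a).sqrt (sub_pos.2 hc).ne').congr_deriv ?_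
  have := sqrt_pos.2 (sub_pos.2 hc)
  field_simp
  ring

/- Up to the constant `π / 4`, the function is `arcsin (x / s) / 2`. -/
theorem hasDerivAt_arctan_sqrt_add_div_sub {s c : ℝ} (hc₁ : -s < c) (hc₂ : c < s) :
    HasDerivAt (fun x : ℝ => arctan √((s + x) / (s - x))) (1 / (2 * √(s ^ 2 - c ^ 2))) c := by
  have hp : 0 < s + c := by linarith
  have hm : 0 < s - c := by linarith
  have hquot : HasDerivAt (fun x : ℝ => (s + x) / (s - x)) (2 * s / (s - c) ^ 2) c :=
    (((hasDerivAt_id c).const_add s).div ((hasDerivAt_id c).const_sub s) hm.ne').congr_deriv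
      (by simp only [id]; ring)
  refine ((hquot.sqrt (div_pos hp hm).ne').arctan).congr_deriv ?_
  have hsq : √(s ^ 2 - c ^ 2) = √(s + c) * √(s - c) := by
    rw [← sqrt_mul hp.le]; ring_nf
  rw [hsq, sqrt_div hp.le, div_pow, sq_sqrt hp.le, sq_sqrt hm.le]
  have := sqrt_pos.2 hp
  have := sqrt_pos.2 hm
  field_simp
  rw [sq_sqrt hm.le]
  ring

theorem stmt0_general (ω c : ℝ)
    (hc1 : -2 * Real.sqrt ω < c) (hc2 : c < 2 * Real.sqrt ω) :
    HasDerivAt (fun c : ℝ =>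
        8 * Real.sqrt ω *
            Real.arctan (Real.sqrt ((2 * Real.sqrt ω + c) / (2 * Real.sqrt ω - c)))
          - 2 * Real.sqrt (4 * ω - c ^ 2))
      (2 * (c + 2 * Real.sqrt ω) / Real.sqrt (4 * ω - c ^ 2)) c ∧
    0 < 2 * (c + 2 * Real.sqrt ω) / Real.sqrt (4 * ω - c ^ 2) := by
  have hω : 0 < ω := sqrt_pos.1 (by linarith)
  have hsq : (2 * √ω) ^ 2 = 4 * ω := by rw [mul_pow, sq_sqrt hω.le]; norm_num
  have hpos : 0 < 4 * ω - c ^ 2 := by nlinarith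
  have harctan := hasDerivAt_arctan_sqrt_add_div_sub (by linarith) hc2
  rw [hsq] at harctan
  have hroot := sqrt_pos.2 hpos
  refine ⟨?_, by apply div_pos <;> linarith⟩
  refine ((harctan.const_mul (8 * √ω)).sub
    ((hasDerivAt_sqrt_sub_sq (a := 4 * ω) (by linarith)).const_mul 2)).congr_deriv ?_
  field_simp
  ring

/-- derivative in `c` of
`f(ω,c) = 8√ω · arctan(√((2√ω+c)/(2√ω-c))) - 2√(4ω-c²)`
equals `2(c+2√ω)/√(4ω-c²)`, which is positive. -/
theorem stmt0 (ω c : ℝ) (hω : 0 < ω)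
    (hc1 : -2 * Real.sqrt ω < c) (hc2 : c < 2 * Real.sqrt ω) :
    HasDerivAt (fun c : ℝ =>
        8 * Real.sqrt ω *
            Real.arctan (Real.sqrt ((2 * Real.sqrt ω + c) / (2 * Real.sqrt ω - c)))
          - 2 * Real.sqrt (4 * ω - c ^ 2))
      (2 * (c + 2 * Real.sqrt ω) / Real.sqrt (4 * ω - c ^ 2)) c ∧
    0 < 2 * (c + 2 * Real.sqrt ω) / Real.sqrt (4 * ω - c ^ 2) :=
  stmt0_general ω c hc1 hc2
end

section
/- For any complex-valued v ∈ H¹(ℝ) and real parameters ω, c, the Nehari functional I(v) = ‖v_x‖²_{L²} + Im∫_ℝ |v|² conj(v) v_x dx + ω‖v‖²_{L²} + c·Im∫_ℝ v conj(v_x) dx can be rewritten as I(v) = ‖v_x - (ic/2)v + (i/2)|v|²v‖²_{L²} + (ω - c²/4)‖v‖²_{L²} + (c/2)‖v‖⁴_{L⁴} - (1/4)‖v‖⁶_{L⁶}. -/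
open MeasureTheory

/-! The identity already holds pointwise: expanding the square, the cross terms of `v_x` with
`-(ic/2)v` and `(i/2)|v|²v` give the two imaginary parts, and the cross term of those two gives
`-(c/2)|v|⁴`. Each term is integrable (products of two `L²` functions by Cauchy–Schwarz, with
`|v|²v̄ ∈ L²` since `v ∈ L⁶`), so the pointwise identity integrates term by term. -/

theorem Complex.sq_norm_sub_I_mul_add_I_mul (c : ℝ) (w z : ℂ) :
    ‖z - (Complex.I * (c / 2)) * w + (Complex.I / 2) * ((‖w‖ ^ 2 : ℝ) : ℂ) * w‖ ^ 2
      = ‖z‖ ^ 2 + (((‖w‖ ^ 2 : ℝ) : ℂ) * (starRingEnd ℂ) w * z).im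
        + c * (w * (starRingEnd ℂ) z).im
        + (c ^ 2 / 4) * ‖w‖ ^ 2 - (c / 2) * ‖w‖ ^ 4 + (1 / 4) * ‖w‖ ^ 6 := by
  have h4 : ‖w‖ ^ 4 = (‖w‖ ^ 2) ^ 2 := by ring
  have h6 : ‖w‖ ^ 6 = (‖w‖ ^ 2) ^ 3 := by ring
  simp only [h4, h6, Complex.sq_norm, Complex.normSq_apply, Complex.add_re, Complex.add_im,
    Complex.sub_re, Complex.sub_im, Complex.mul_re, Complex.mul_im, Complex.I_re, Complex.I_im,
    Complex.ofReal_re, Complex.ofReal_im, Complex.div_re, Complex.div_im, Complex.conj_re,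
    Complex.conj_im, Complex.re_ofNat, Complex.im_ofNat]
  ring

variable {α : Type*} [MeasurableSpace α] {μ : Measure α}

theorem MeasureTheory.MemLp.sq_norm_mul_conj {v : α → ℂ} (hv : MemLp v 6 μ) :
    MemLp (fun x => ((‖v x‖ ^ 2 : ℝ) : ℂ) * (starRingEnd ℂ) (v x)) 2 μ := by
  refine (memLp_two_iff_integrable_sq_norm (by have := hv.1; fun_prop)).2 ?_
  refine (hv.integrable_norm_pow (by norm_num)).congr (.of_forall fun x => ?_)
  simp only [norm_mul, Complex.norm_real, Complex.norm_conj, Real.norm_eq_abs,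
    abs_of_nonneg (sq_nonneg ‖v x‖)]
  ring

theorem stmt3_general (ω c : ℝ) (v v' : ℝ → ℂ)
    (hv2 : MemLp v 2 volume) (hv'2 : MemLp v' 2 volume)
    (hv4 : MemLp v 4 volume) (hv6 : MemLp v 6 volume) :
    (∫ x, ‖v' x‖ ^ 2)
      + (∫ x, (((‖v x‖ ^ 2 : ℝ) : ℂ) * (starRingEnd ℂ) (v x) * v' x).im)
      + ω * (∫ x, ‖v x‖ ^ 2)
      + c * (∫ x, (v x * (starRingEnd ℂ) (v' x)).im)
    = (∫ x, ‖v' x - (Complex.I * (c / 2)) * v x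
          + (Complex.I / 2) * ((‖v x‖ ^ 2 : ℝ) : ℂ) * v x‖ ^ 2)
      + (ω - c ^ 2 / 4) * (∫ x, ‖v x‖ ^ 2)
      + (c / 2) * (∫ x, ‖v x‖ ^ 4)
      - (1 / 4) * (∫ x, ‖v x‖ ^ 6) := by
  have hv'_sq := hv'2.integrable_norm_pow two_ne_zero
  have hcubic : Integrable (fun x => (((‖v x‖ ^ 2 : ℝ) : ℂ) * (starRingEnd ℂ) (v x) * v' x).im) :=
    (hv6.sq_norm_mul_conj.integrable_mul hv'2).im
  have hcross : Integrable (fun x => (v x * (starRingEnd ℂ) (v' x)).im) :=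
    (hv2.integrable_mul hv'2.star).im
  have hv_sq := hv2.integrable_norm_pow two_ne_zero
  have hv_four := hv4.integrable_norm_pow four_ne_zero
  have hv_six := hv6.integrable_norm_pow (by norm_num : 6 ≠ 0)
  simp_rw [Complex.sq_norm_sub_I_mul_add_I_mul]
  rw [integral_add (by fun_prop) (by fun_prop), integral_sub (by fun_prop) (by fun_prop),
    integral_add (by fun_prop) (by fun_prop), integral_add (by fun_prop) (by fun_prop),
    integral_add hv'_sq hcubic]
  simp only [integral_const_mul]
  ring

/-- rewriting of the Nehari functional
`I(v) = ‖v_x‖² + Im∫|v|²conj(v)v_x + ω‖v‖² + c·Im∫v·conj(v_x)` as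
`‖v_x - (ic/2)v + (i/2)|v|²v‖² + (ω-c²/4)‖v‖² + (c/2)‖v‖⁴_{L⁴} - (1/4)‖v‖⁶_{L⁶}`. -/
theorem stmt3 (ω c : ℝ) (v v' : ℝ → ℂ)
    (hderiv : ∀ x, HasDerivAt v (v' x) x)
    (hv2 : MemLp v 2 volume) (hv'2 : MemLp v' 2 volume)
    (hv4 : MemLp v 4 volume) (hv6 : MemLp v 6 volume) :
    (∫ x, ‖v' x‖ ^ 2)
      + (∫ x, (((‖v x‖ ^ 2 : ℝ) : ℂ) * (starRingEnd ℂ) (v x) * v' x).im)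
      + ω * (∫ x, ‖v x‖ ^ 2)
      + c * (∫ x, (v x * (starRingEnd ℂ) (v' x)).im)
    = (∫ x, ‖v' x - (Complex.I * (c / 2)) * v x
          + (Complex.I / 2) * ((‖v x‖ ^ 2 : ℝ) : ℂ) * v x‖ ^ 2)
      + (ω - c ^ 2 / 4) * (∫ x, ‖v x‖ ^ 2)
      + (c / 2) * (∫ x, ‖v x‖ ^ 4)
      - (1 / 4) * (∫ x, ‖v x‖ ^ 6) :=
  stmt3_general ω c v v' hv2 hv'2 hv4 hv6
end

section
/- There exists δ > 0 such that for every v ∈ H¹(ℝ;ℂ), v ≠ 0, satisfying I(v) = 0 (where I is the Nehari functional I(v) = ‖v_x‖² + Im∫|v|²conj(v)v_x + ω‖v‖²_{L²} + c·Im∫v·conj(v_x)) with 4ω > c², one has ‖v‖²_{H¹} > δ. Consequently the Nehari minimum m_N = inf{S(v) : v ∈ H¹∖{0}, I(v)=0} is strictly positive, where S(v) = E(v) + ωM(v) + cP(v) with E(v) = (1/2)‖v_x‖² + (1/4)Im∫|v|²conj(v)v_x, M(v) = (1/2)‖v‖²_{L²}, P(v) = (1/2)Im∫v·conj(v_x).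 -/
open MeasureTheory

/-- `v ∈ H¹(ℝ;ℂ)` with weak derivative `v'` (data given as a pair). -/
def H1pair (v v' : ℝ → ℂ) : Prop :=
  (∀ x, HasDerivAt v (v' x) x) ∧ MemLp v 2 volume ∧ MemLp v' 2 volume

/-- The Nehari functional `I(v)`. -/
noncomputable def Ifun (ω c : ℝ) (v v' : ℝ → ℂ) : ℝ :=
  (∫ x, ‖v' x‖ ^ 2)
    + (∫ x, (((‖v x‖ ^ 2 : ℝ) : ℂ) * (starRingEnd ℂ) (v x) * v' x).im)
    + ω * (∫ x, ‖v x‖ ^ 2)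
    + c * (∫ x, (v x * (starRingEnd ℂ) (v' x)).im)

/-- The action `S = E + ωM + cP`. -/
noncomputable def Sfun (ω c : ℝ) (v v' : ℝ → ℂ) : ℝ :=
  ((1 / 2) * (∫ x, ‖v' x‖ ^ 2)
      + (1 / 4) * (∫ x, (((‖v x‖ ^ 2 : ℝ) : ℂ) * (starRingEnd ℂ) (v x) * v' x).im))
    + ω * ((1 / 2) * ∫ x, ‖v x‖ ^ 2)
    + c * ((1 / 2) * ∫ x, (v x * (starRingEnd ℂ) (v' x)).im)

/-!
On the Nehari manifold `I(v) = 0` the quadratic part `L(v) = ‖v_x‖² + ω‖v‖² + c Im∫ v v̄_x`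
equals minus the quartic term, which the one-dimensional Sobolev embedding bounds by `‖v‖⁴_{H¹}`.
Since `c² < 4ω` makes `L` coercive, `ε ‖v‖²_{H¹} ≤ L(v) ≤ ‖v‖⁴_{H¹}`, whence `‖v‖²_{H¹} ≥ ε` and
`S(v) = L(v)/4 ≥ ε²/4`. The infimum is over a nonempty set: a Gaussian modulated by `e^{-ix}` has
negative quartic term, and a real multiple of it lies on the Nehari manifold.
-/

open Filter Set Topology ComplexConjugate

noncomputable def Lfun (ω c : ℝ) (v v' : ℝ → ℂ) : ℝ :=
  (∫ x, ‖v' x‖ ^ 2) + ω * (∫ x, ‖v x‖ ^ 2) + c * ∫ x, (v x * conj (v' x)).im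

noncomputable def Qfun (v v' : ℝ → ℂ) : ℝ :=
  ∫ x, (((‖v x‖ ^ 2 : ℝ) : ℂ) * conj (v x) * v' x).im

noncomputable def H1normSq (v v' : ℝ → ℂ) : ℝ :=
  (∫ x, ‖v x‖ ^ 2) + ∫ x, ‖v' x‖ ^ 2

lemma Ifun_eq_Lfun_add_Qfun (ω c : ℝ) (v v' : ℝ → ℂ) :
    Ifun ω c v v' = Lfun ω c v v' + Qfun v v' := by
  unfold Ifun Lfun Qfun
  ring

lemma Sfun_eq_Lfun_add_Ifun (ω c : ℝ) (v v' : ℝ → ℂ) :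
    Sfun ω c v v' = Lfun ω c v v' / 4 + Ifun ω c v v' / 4 := by
  rw [Ifun_eq_Lfun_add_Qfun]
  unfold Sfun Lfun Qfun
  ring

lemma Lfun_ofReal_mul (ω c a : ℝ) (v v' : ℝ → ℂ) :
    Lfun ω c (fun x => a * v x) (fun x => a * v' x) = a ^ 2 * Lfun ω c v v' := by
  have hnorm : ∀ z : ℂ, ‖(a : ℂ) * z‖ ^ 2 = a ^ 2 * ‖z‖ ^ 2 := fun z => by
    rw [norm_mul, Complex.norm_real, mul_pow, Real.norm_eq_abs, sq_abs]
  have him : ∀ z w : ℂ, ((a : ℂ) * z * conj ((a : ℂ) * w)).im = a ^ 2 * (z * conj w).im :=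
    fun z w => by
      rw [map_mul, Complex.conj_ofReal, ← Complex.im_ofReal_mul]
      push_cast
      ring_nf
  simp only [Lfun, hnorm, him, integral_const_mul]
  ring

lemma Qfun_ofReal_mul (a : ℝ) (v v' : ℝ → ℂ) :
    Qfun (fun x => a * v x) (fun x => a * v' x) = a ^ 4 * Qfun v v' := by
  have hquartic : ∀ z w : ℂ, (((‖(a : ℂ) * z‖ ^ 2 : ℝ) : ℂ) * conj ((a : ℂ) * z) * (a * w)).im
      = a ^ 4 * (((‖z‖ ^ 2 : ℝ) : ℂ) * conj z * w).im := fun z w => by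
    rw [map_mul, Complex.conj_ofReal, norm_mul, Complex.norm_real, Real.norm_eq_abs, mul_pow,
      sq_abs, ← Complex.im_ofReal_mul]
    push_cast
    ring_nf
  simp only [Qfun, hquartic, integral_const_mul]

lemma abs_im_mul_conj_le (a b : ℂ) : |(a * conj b).im| ≤ ‖a‖ * ‖b‖ := by
  simpa [norm_mul] using Complex.abs_im_le_norm (a * conj b)

lemma mul_norm_le_add_sq (a b : ℂ) : ‖a‖ * ‖b‖ ≤ ‖a‖ ^ 2 + ‖b‖ ^ 2 := by
  nlinarith [sq_nonneg (‖a‖ - ‖b‖), norm_nonneg a, norm_nonneg b]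

def IsCoercivityConst (ω c ε : ℝ) : Prop :=
  ∀ a b : ℂ, ε * (‖a‖ ^ 2 + ‖b‖ ^ 2) ≤ ‖b‖ ^ 2 + ω * ‖a‖ ^ 2 + c * (a * conj b).im

lemma exists_pos_isCoercivityConst (ω c : ℝ) (hωc : c ^ 2 < 4 * ω) :
    ∃ ε > (0 : ℝ), IsCoercivityConst ω c ε := by
  have hω : 0 < 1 + ω := by nlinarith [sq_nonneg c]
  set ε := (4 * ω - c ^ 2) / (4 * (1 + ω)) with hε
  have hε_def : ε * (4 * (1 + ω)) = 4 * ω - c ^ 2 := by rw [hε]; field_simp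
  have hε_pos : 0 < ε := by rw [hε]; apply div_pos <;> linarith
  have hε_lt : ε < 1 := by rw [hε, div_lt_one (by linarith)]; nlinarith [sq_nonneg c]
  refine ⟨ε, hε_pos, fun a b => ?_⟩
  have hcross : -(|c| * (‖a‖ * ‖b‖)) ≤ c * (a * conj b).im := by
    have := mul_le_mul_of_nonneg_left (abs_im_mul_conj_le a b) (abs_nonneg c)
    rw [← abs_mul] at this
    linarith [neg_abs_le (c * (a * conj b).im)]
  -- `4(1 - ε)(ω - ε) - c² = 4ε²`, so completing the square in `‖b‖` leaves `ε² ‖a‖² ≥ 0`.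
  have hsquare : 0 ≤ (1 - ε) * ‖b‖ ^ 2 - |c| * (‖a‖ * ‖b‖) + (ω - ε) * ‖a‖ ^ 2 := by
    have h4 : 4 * (1 - ε) * ((1 - ε) * ‖b‖ ^ 2 - |c| * (‖a‖ * ‖b‖) + (ω - ε) * ‖a‖ ^ 2)
        = (2 * (1 - ε) * ‖b‖ - |c| * ‖a‖) ^ 2 + 4 * ε ^ 2 * ‖a‖ ^ 2 := by
      linear_combination (-‖a‖ ^ 2) * hε_def + (-‖a‖ ^ 2) * sq_abs c
    rw [← mul_nonneg_iff_of_pos_left (by linarith : (0 : ℝ) < 4 * (1 - ε)), h4]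
    positivity
  linarith

lemma H1normSq_nonneg (v v' : ℝ → ℂ) : 0 ≤ H1normSq v v' :=
  add_nonneg (integral_nonneg fun _ => by positivity) (integral_nonneg fun _ => by positivity)

namespace H1pair

variable {v v' : ℝ → ℂ} {ω c ε : ℝ}

lemma continuous (hv : H1pair v v') : Continuous v :=
  continuous_iff_continuousAt.mpr fun x => (hv.1 x).continuousAt

lemma integrable_sq_norm (hv : H1pair v v') : Integrable (fun x => ‖v x‖ ^ 2) :=
  (memLp_two_iff_integrable_sq_norm hv.2.1.aestronglyMeasurable).mp hv.2.1

lemma integrable_sq_norm_deriv (hv : H1pair v v') : Integrable (fun x => ‖v' x‖ ^ 2) :=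
  (memLp_two_iff_integrable_sq_norm hv.2.2.aestronglyMeasurable).mp hv.2.2

lemma integrable_norm_mul_norm (hv : H1pair v v') : Integrable (fun x => ‖v x‖ * ‖v' x‖) :=
  hv.2.1.norm.integrable_mul hv.2.2.norm

lemma integral_add_sq_norm (hv : H1pair v v') :
    ∫ x, (‖v x‖ ^ 2 + ‖v' x‖ ^ 2) = H1normSq v v' :=
  integral_add hv.integrable_sq_norm hv.integrable_sq_norm_deriv

lemma integral_norm_mul_norm_le (hv : H1pair v v') :
    ∫ x, ‖v x‖ * ‖v' x‖ ≤ H1normSq v v' := by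
  rw [← hv.integral_add_sq_norm]
  exact integral_mono hv.integrable_norm_mul_norm
    (hv.integrable_sq_norm.add hv.integrable_sq_norm_deriv) fun x => mul_norm_le_add_sq _ _

lemma sq_norm_le_H1normSq (hv : H1pair v v') (x : ℝ) : ‖v x‖ ^ 2 ≤ H1normSq v v' := by
  have hderiv : ∀ t, HasDerivAt (‖v ·‖ ^ 2) (2 * inner ℝ (v t) (v' t)) t :=
    fun t => (hv.1 t).norm_sq
  have hinner : ∀ t, 2 * inner ℝ (v t) (v' t) ≤ ‖v t‖ ^ 2 + ‖v' t‖ ^ 2 := fun t => by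
    nlinarith [real_inner_le_norm (v t) (v' t), sq_nonneg (‖v t‖ - ‖v' t‖)]
  have hint_deriv : Integrable (fun t => 2 * inner ℝ (v t) (v' t)) :=
    (hv.integrable_norm_mul_norm.const_mul 2).mono'
      ((hv.continuous.aestronglyMeasurable.inner hv.2.2.aestronglyMeasurable).const_mul 2)
      (Eventually.of_forall fun t => by
        rw [norm_mul, Real.norm_two]
        exact mul_le_mul_of_nonneg_left (norm_inner_le_norm _ _) zero_le_two)
  have hlim : Tendsto (‖v ·‖ ^ 2) atBot (𝓝 0) :=
    tendsto_zero_of_hasDerivAt_of_integrableOn_Iic (a := x) (fun t _ => hderiv t)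
      hint_deriv.integrableOn hv.integrable_sq_norm.integrableOn
  have hftc := integral_Iic_of_hasDerivAt_of_tendsto' (a := x) (fun t _ => hderiv t)
    hint_deriv.integrableOn hlim
  rw [sub_zero] at hftc
  rw [← hftc, ← hv.integral_add_sq_norm]
  have hsum := hv.integrable_sq_norm.add hv.integrable_sq_norm_deriv
  calc ∫ t in Iic x, 2 * inner ℝ (v t) (v' t)
      ≤ ∫ t in Iic x, (‖v t‖ ^ 2 + ‖v' t‖ ^ 2) :=
        setIntegral_mono hint_deriv.integrableOn hsum.integrableOn hinner
    _ ≤ ∫ t, (‖v t‖ ^ 2 + ‖v' t‖ ^ 2) :=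
        setIntegral_le_integral hsum (Eventually.of_forall fun t => by positivity)

lemma H1normSq_pos (hv : H1pair v v') (hne : v ≠ 0) : 0 < H1normSq v v' := by
  obtain ⟨x, hx⟩ := Function.ne_iff.mp hne
  have hmass : 0 < ∫ x, ‖v x‖ ^ 2 := by
    rw [integral_pos_iff_support_of_nonneg (fun t => by positivity) hv.integrable_sq_norm]
    exact (isOpen_compl_singleton.preimage (hv.continuous.norm.pow 2)).measure_pos volume
      ⟨x, by simpa using hx⟩
  exact hmass.trans_le (le_add_of_nonneg_right (integral_nonneg fun _ => by positivity))

lemma integrable_im_mul_conj (hv : H1pair v v') :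
    Integrable (fun x => (v x * conj (v' x)).im) :=
  hv.integrable_norm_mul_norm.mono'
    (Complex.continuous_im.comp_aestronglyMeasurable (hv.continuous.aestronglyMeasurable.mul
      (Complex.continuous_conj.comp_aestronglyMeasurable hv.2.2.aestronglyMeasurable)))
    (Eventually.of_forall fun _ => abs_im_mul_conj_le _ _)

lemma abs_Qfun_le (hv : H1pair v v') : |Qfun v v'| ≤ H1normSq v v' ^ 2 := by
  have hpoint : ∀ x, ‖(((‖v x‖ ^ 2 : ℝ) : ℂ) * conj (v x) * v' x).im‖
      ≤ H1normSq v v' * (‖v x‖ * ‖v' x‖) := fun x => by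
    rw [mul_assoc, Complex.im_ofReal_mul, norm_mul, Real.norm_of_nonneg (sq_nonneg ‖v x‖)]
    refine mul_le_mul (hv.sq_norm_le_H1normSq x) ?_ (norm_nonneg _) (H1normSq_nonneg v v')
    simpa [mul_comm] using abs_im_mul_conj_le (v' x) (v x)
  calc |Qfun v v'| ≤ ∫ x, H1normSq v v' * (‖v x‖ * ‖v' x‖) :=
        norm_integral_le_of_norm_le (hv.integrable_norm_mul_norm.const_mul _)
          (Eventually.of_forall hpoint)
    _ ≤ H1normSq v v' ^ 2 := by
      rw [integral_const_mul, sq]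
      exact mul_le_mul_of_nonneg_left hv.integral_norm_mul_norm_le (H1normSq_nonneg v v')

lemma const_mul (hv : H1pair v v') (a : ℂ) : H1pair (fun x => a * v x) (fun x => a * v' x) :=
  ⟨fun x => (hv.1 x).const_mul a, hv.2.1.const_mul a, hv.2.2.const_mul a⟩

lemma mul_H1normSq_le_Lfun (hε : IsCoercivityConst ω c ε) (hv : H1pair v v') :
    ε * H1normSq v v' ≤ Lfun ω c v v' := by
  have hv2 := hv.integrable_sq_norm
  have hv'2 := hv.integrable_sq_norm_deriv
  have hp := hv.integrable_im_mul_conj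
  calc ε * H1normSq v v' = ∫ x, ε * (‖v x‖ ^ 2 + ‖v' x‖ ^ 2) := by
        rw [integral_const_mul, hv.integral_add_sq_norm]
    _ ≤ ∫ x, (‖v' x‖ ^ 2 + ω * ‖v x‖ ^ 2 + c * (v x * conj (v' x)).im) :=
        integral_mono ((hv2.add hv'2).const_mul ε) ((hv'2.add (hv2.const_mul ω)).add
          (hp.const_mul c)) fun x => hε (v x) (v' x)
    _ = Lfun ω c v v' := by
        rw [integral_add (hv'2.fun_add (hv2.const_mul ω)) (hp.const_mul c),
          integral_add hv'2 (hv2.const_mul ω), integral_const_mul, integral_const_mul]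
        rfl

lemma le_H1normSq_of_Ifun_eq_zero (hε : IsCoercivityConst ω c ε) (hv : H1pair v v')
    (hne : v ≠ 0) (hI : Ifun ω c v v' = 0) : ε ≤ H1normSq v v' := by
  refine le_of_mul_le_mul_right ?_ (hv.H1normSq_pos hne)
  calc ε * H1normSq v v' ≤ Lfun ω c v v' := hv.mul_H1normSq_le_Lfun hε
    _ = -Qfun v v' := by linarith [Ifun_eq_Lfun_add_Qfun ω c v v']
    _ ≤ |Qfun v v'| := neg_le_abs _
    _ ≤ H1normSq v v' * H1normSq v v' := sq (H1normSq v v') ▸ hv.abs_Qfun_le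

lemma sq_le_Lfun_of_Ifun_eq_zero (hε : IsCoercivityConst ω c ε) (hε₀ : 0 ≤ ε)
    (hv : H1pair v v') (hne : v ≠ 0) (hI : Ifun ω c v v' = 0) : ε ^ 2 ≤ Lfun ω c v v' :=
  calc ε ^ 2 = ε * ε := sq ε
    _ ≤ ε * H1normSq v v' :=
      mul_le_mul_of_nonneg_left (le_H1normSq_of_Ifun_eq_zero hε hv hne hI) hε₀
    _ ≤ Lfun ω c v v' := hv.mul_H1normSq_le_Lfun hε

end H1pair

open Complex in
-- Modulating the Gaussian by `e^{-ix}` makes `Im(w̄ w') = -|w|²`, so `Q(w) = -∫ |w|⁴`.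
lemma exists_H1pair_Qfun_neg : ∃ w w' : ℝ → ℂ, H1pair w w' ∧ Qfun w w' < 0 := by
  set w : ℝ → ℂ := fun x => cexp (-(x : ℂ) ^ 2 - I * x)
  set w' : ℝ → ℂ := fun x => w x * (-2 * x - I)
  have hderiv : ∀ x, HasDerivAt w (w' x) x := fun x => by
    have hexponent : HasDerivAt (fun z : ℂ => -z ^ 2 - I * z) (-2 * x - I) x := by
      simpa using
        (hasDerivAt_pow 2 (x : ℂ)).fun_neg.fun_sub ((hasDerivAt_id (x : ℂ)).const_mul I)
    exact hexponent.cexp.comp_ofReal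
  have hw_cont : Continuous w := by fun_prop
  have hnorm : ∀ x : ℝ, ‖w x‖ ^ 2 = Real.exp (-2 * x ^ 2) := fun x => by
    rw [Complex.norm_exp, ← Real.exp_nat_mul]
    congr 1
    simp [← ofReal_pow]
  have hnorm' : ∀ x : ℝ,
      ‖w' x‖ ^ 2 = 4 * (x ^ 2 * Real.exp (-2 * x ^ 2)) + Real.exp (-2 * x ^ 2) := fun x => by
    rw [norm_mul, mul_pow, hnorm, Complex.sq_norm, normSq_apply]
    simp
    ring
  have hdensity : ∀ x : ℝ, (((‖w x‖ ^ 2 : ℝ) : ℂ) * conj (w x) * w' x).im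
      = -Real.exp (-4 * x ^ 2) := fun x => by
    have hsq : conj (w x) * w' x = ((‖w x‖ ^ 2 : ℝ) : ℂ) * (-2 * x - I) := by
      rw [ofReal_pow, ← Complex.conj_mul']
      ring
    have him : (-2 * (x : ℂ) - I).im = -1 := by simp
    rw [mul_assoc, hsq, im_ofReal_mul, im_ofReal_mul, him, hnorm,
      show -4 * x ^ 2 = -2 * x ^ 2 + -2 * x ^ 2 by ring, Real.exp_add]
    ring
  have hgauss : Integrable (fun x : ℝ => Real.exp (-2 * x ^ 2)) :=
    integrable_exp_neg_mul_sq (by norm_num)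
  have hmoment : Integrable (fun x : ℝ => x ^ 2 * Real.exp (-2 * x ^ 2)) := by
    simpa only [Real.rpow_two] using
      integrable_rpow_mul_exp_neg_mul_sq (b := 2) (by norm_num) (s := 2) (by norm_num)
  refine ⟨w, w', ⟨hderiv, ?_, ?_⟩, ?_⟩
  · rw [memLp_two_iff_integrable_sq_norm hw_cont.aestronglyMeasurable]
    simpa only [hnorm] using hgauss
  · rw [memLp_two_iff_integrable_sq_norm (by fun_prop)]
    simpa only [hnorm'] using (hmoment.const_mul 4).fun_add hgauss
  · rw [Qfun]
    simp_rw [hdensity]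
    rw [integral_neg, integral_gaussian, neg_lt_zero]
    positivity

lemma exists_H1pair_ne_zero_Ifun_eq_zero (ω c : ℝ) (hωc : c ^ 2 < 4 * ω) :
    ∃ v v' : ℝ → ℂ, H1pair v v' ∧ v ≠ 0 ∧ Ifun ω c v v' = 0 := by
  obtain ⟨ε, hε₀, hε⟩ := exists_pos_isCoercivityConst ω c hωc
  obtain ⟨w, w', hw, hQ⟩ := exists_H1pair_Qfun_neg
  have hw₀ : w ≠ 0 := by
    rintro rfl
    simp [Qfun] at hQ
  have hL : 0 < Lfun ω c w w' :=
    (mul_pos hε₀ (hw.H1normSq_pos hw₀)).trans_le (hw.mul_H1normSq_le_Lfun hε)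
  have hratio : 0 < Lfun ω c w w' / -Qfun w w' := div_pos hL (neg_pos.mpr hQ)
  -- `I(a w) = a² L(w) + a⁴ Q(w)` vanishes for `a² = L(w) / (-Q(w))`.
  set a := Real.sqrt (Lfun ω c w w' / -Qfun w w')
  have ha : a ^ 2 = Lfun ω c w w' / -Qfun w w' := Real.sq_sqrt hratio.le
  have ha₀ : a ≠ 0 := (Real.sqrt_pos.mpr hratio).ne'
  refine ⟨fun x => a * w x, fun x => a * w' x, hw.const_mul a, ?_, ?_⟩
  · intro h
    exact hw₀ (funext fun x => by simpa [ha₀] using congrFun h x)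
  · rw [Ifun_eq_Lfun_add_Qfun, Lfun_ofReal_mul, Qfun_ofReal_mul,
      show a ^ 4 = a ^ 2 * a ^ 2 by ring, ha]
    field_simp
    ring

/-- uniform `H¹` lower bound on the Nehari manifold, and
positivity of the Nehari minimum `m_N`. -/
theorem stmt4 (ω c : ℝ) (hωc : c ^ 2 < 4 * ω) :
    ∃ δ > (0 : ℝ),
      (∀ v v' : ℝ → ℂ, H1pair v v' → v ≠ 0 → Ifun ω c v v' = 0 →
        (∫ x, ‖v x‖ ^ 2) + (∫ x, ‖v' x‖ ^ 2) > δ) ∧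
      0 < sInf {m : ℝ |
        ∃ v v' : ℝ → ℂ, H1pair v v' ∧ v ≠ 0 ∧ Ifun ω c v v' = 0 ∧ Sfun ω c v v' = m} := by
  obtain ⟨ε, hε₀, hε⟩ := exists_pos_isCoercivityConst ω c hωc
  refine ⟨ε / 2, half_pos hε₀, fun v v' hv hne hI => ?_, ?_⟩
  · exact (half_lt_self hε₀).trans_le (hv.le_H1normSq_of_Ifun_eq_zero hε hne hI)
  · obtain ⟨v, v', hv, hne, hI⟩ := exists_H1pair_ne_zero_Ifun_eq_zero ω c hωc
    refine (by positivity : 0 < ε ^ 2 / 4).trans_le (le_csInf ⟨_, v, v', hv, hne, hI, rfl⟩ ?_)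
    rintro _ ⟨u, u', hu, hune, huI, rfl⟩
    rw [Sfun_eq_Lfun_add_Ifun, huI]
    linarith [hu.sq_le_Lfun_of_Ifun_eq_zero hε hε₀.le hune huI]
end

section
/- Let φ : ℝ → ℝ and v : ℝ → ℝ be H²(ℝ) solutions of the linear ODE L₋u = 0, where L₋ = -∂_xx + a + (c/2)φ² - (3/16)φ⁴ + (φφ_x)/2 - (φ²/2)∂_x for constants a > 0, c ∈ ℝ. Then the Wronskian W = φ_x v - φ v_x satisfies W' = -(φ²/2)W, hence W(x) = W(0)·exp(-(1/2)∫₀ˣ φ²(y)dy). If moreover φ, φ_x, v, v_x all tend to 0 as x → ±∞, then W ≡ 0, and consequently v is a scalar multiple of φ (assuming φ ≢ 0). -/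
/-!
Writing `L₋u = 0` as `u'' = q u + p u'` with `p = -φ²/2`, the Wronskian of two solutions obeys
Abel's identity `W' = p W`. Since `p ≤ 0`, `W²` is nonincreasing, and `W → 0` at `-∞` forces
`W ≡ 0`. If `φ x₀ ≠ 0`, then `w = v - (v x₀ / φ x₀) φ` solves the same equation with
`w x₀ = 0` and `w' x₀ = -W x₀ / φ x₀ = 0`, so `w ≡ 0` by uniqueness for linear ODEs.
-/

open Filter Set Topology

theorem linear_ODE_solution_eq_zero {E : Type*} [NormedAddCommGroup E] [NormedSpace ℝ E]
    {A : ℝ → E →L[ℝ] E} (hA : Continuous A) {y : ℝ → E}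
    (hy : ∀ t, HasDerivAt y (A t (y t)) t) {t₀ : ℝ} (h₀ : y t₀ = 0) : y = 0 := by
  funext t
  -- On a compact interval around `t` and `t₀` the operators `A s` are uniformly bounded,
  -- hence uniformly Lipschitz, and Grönwall-type uniqueness applies.
  set I := Ioo (min t t₀ - 1) (max t t₀ + 1)
  obtain ⟨C, hC⟩ := isCompact_Icc.exists_bound_of_continuousOn hA.continuousOn
  have hlip : ∀ s ∈ I, LipschitzOnWith C.toNNReal (A s) univ := fun s hs =>
    ((A s).lipschitz.weaken (by simpa [← NNReal.coe_le_coe] using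
      (hC s (Ioo_subset_Icc_self hs)).trans (le_max_left C 0))).lipschitzOnWith
  have hmem : ∀ {x}, min t t₀ ≤ x → x ≤ max t t₀ → x ∈ I :=
    fun h₁ h₂ => ⟨by linarith, by linarith⟩
  exact ODE_solution_unique_of_mem_Icc hlip (hmem (min_le_right _ _) (le_max_right _ _))
    (HasDerivAt.continuousOn fun s _ => hy s) (fun s _ => hy s) (fun _ _ => mem_univ _)
    continuousOn_const (fun s _ => by simpa using hasDerivAt_const s (0 : E))
    (fun _ _ => mem_univ _) h₀ (Ioo_subset_Icc_self (hmem (min_le_left _ _) (le_max_left _ _)))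

theorem eq_mul_exp_integral_of_hasDerivAt {p W : ℝ → ℝ} (hp : Continuous p)
    (hW : ∀ x, HasDerivAt W (p x * W x) x) (x : ℝ) :
    W x = W 0 * Real.exp (∫ y in (0 : ℝ)..x, p y) := by
  set P : ℝ → ℝ := fun x => ∫ y in (0 : ℝ)..x, p y
  have hP : ∀ x, HasDerivAt P (p x) x := fun x =>
    (hp.integral_hasStrictDerivAt 0 x).hasDerivAt
  have hconst : ∀ x, HasDerivAt (fun x => W x * Real.exp (-P x)) 0 x := fun x =>
    ((hW x).mul (hP x).neg.exp).congr_deriv (by ring)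
  have h := is_const_of_deriv_eq_zero (fun y => (hconst y).differentiableAt)
    (fun y => (hconst y).deriv) x 0
  simp only [P, intervalIntegral.integral_same, neg_zero, Real.exp_zero, mul_one] at h
  rw [← h, mul_assoc, ← Real.exp_add, neg_add_cancel, Real.exp_zero, mul_one]

theorem eq_zero_of_hasDerivAt_mul_of_tendsto_atBot {p W : ℝ → ℝ} (hp : ∀ x, p x ≤ 0)
    (hW : ∀ x, HasDerivAt W (p x * W x) x) (hlim : Tendsto W atBot (𝓝 0)) (x : ℝ) :
    W x = 0 := by
  have hsq : ∀ x, HasDerivAt (fun x => W x ^ 2) (2 * p x * W x ^ 2) x := fun x =>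
    ((hW x).pow 2).congr_deriv (by ring)
  have hanti : Antitone fun x => W x ^ 2 :=
    antitone_of_deriv_nonpos (fun x => (hsq x).differentiableAt) fun x => by
      rw [(hsq x).deriv]
      exact mul_nonpos_of_nonpos_of_nonneg (by linarith [hp x]) (sq_nonneg _)
  have hle : W x ^ 2 ≤ 0 :=
    ge_of_tendsto (by simpa using hlim.pow 2) (eventually_atBot.2 ⟨x, fun y hy => hanti hy⟩)
  exact pow_eq_zero_iff two_ne_zero |>.1 (le_antisymm hle (sq_nonneg _))

section SecondOrder

variable {q p : ℝ → ℝ}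

theorem second_order_linear_ODE_solution_eq_zero (hq : Continuous q) (hp : Continuous p)
    {w w' w'' : ℝ → ℝ} (hw : ∀ x, HasDerivAt w (w' x) x)
    (hw' : ∀ x, HasDerivAt w' (w'' x) x) (hode : ∀ x, w'' x = q x * w x + p x * w' x)
    {x₀ : ℝ} (h₀ : w x₀ = 0) (h₀' : w' x₀ = 0) :
    w = 0 := by
  set A : ℝ → (ℝ × ℝ) →L[ℝ] ℝ × ℝ := fun t =>
    (ContinuousLinearMap.snd ℝ ℝ ℝ).prod
      (q t • ContinuousLinearMap.fst ℝ ℝ ℝ + p t • ContinuousLinearMap.snd ℝ ℝ ℝ)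
  have hA : Continuous A := (ContinuousLinearMap.prodₗᵢ ℝ).continuous.comp
    (continuous_const.prodMk ((hq.smul continuous_const).add (hp.smul continuous_const)))
  have hy : ∀ t, HasDerivAt (fun t => (w t, w' t)) (A t (w t, w' t)) t := fun t => by
    simpa [A, hode t] using (hw t).prodMk (hw' t)
  have h := linear_ODE_solution_eq_zero hA hy (t₀ := x₀) (by simp [h₀, h₀'])
  funext x
  exact congrArg Prod.fst (congrFun h x)

variable {u₁ u₁' u₁'' u₂ u₂' u₂'' : ℝ → ℝ}

theorem hasDerivAt_wronskian
    (hu₁ : ∀ x, HasDerivAt u₁ (u₁' x) x) (hu₁' : ∀ x, HasDerivAt u₁' (u₁'' x) x)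
    (hu₂ : ∀ x, HasDerivAt u₂ (u₂' x) x) (hu₂' : ∀ x, HasDerivAt u₂' (u₂'' x) x)
    (hode₁ : ∀ x, u₁'' x = q x * u₁ x + p x * u₁' x)
    (hode₂ : ∀ x, u₂'' x = q x * u₂ x + p x * u₂' x) (x : ℝ) :
    HasDerivAt (fun x => u₁' x * u₂ x - u₁ x * u₂' x)
      (p x * (u₁' x * u₂ x - u₁ x * u₂' x)) x :=
  (((hu₁' x).mul (hu₂ x)).sub ((hu₁ x).mul (hu₂' x))).congr_deriv
    (by rw [hode₁, hode₂]; ring)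

theorem eq_const_mul_of_wronskian_eq_zero (hq : Continuous q) (hp : Continuous p)
    (hu₁ : ∀ x, HasDerivAt u₁ (u₁' x) x) (hu₁' : ∀ x, HasDerivAt u₁' (u₁'' x) x)
    (hu₂ : ∀ x, HasDerivAt u₂ (u₂' x) x) (hu₂' : ∀ x, HasDerivAt u₂' (u₂'' x) x)
    (hode₁ : ∀ x, u₁'' x = q x * u₁ x + p x * u₁' x)
    (hode₂ : ∀ x, u₂'' x = q x * u₂ x + p x * u₂' x)
    (hW : ∀ x, u₁' x * u₂ x - u₁ x * u₂' x = 0) {x₀ : ℝ} (hx₀ : u₁ x₀ ≠ 0) :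
    u₂ = fun x => (u₂ x₀ / u₁ x₀) * u₁ x := by
  set k := u₂ x₀ / u₁ x₀
  have h := second_order_linear_ODE_solution_eq_zero hq hp (w := fun x => u₂ x - k * u₁ x)
    (fun x => (hu₂ x).sub ((hu₁ x).const_mul k))
    (fun x => (hu₂' x).sub ((hu₁' x).const_mul k))
    (fun x => by rw [hode₁, hode₂]; ring) (x₀ := x₀) (by simp only [k]; field_simp; ring)
    (by simp only [k]; field_simp; linear_combination -hW x₀)
  funext x
  exact sub_eq_zero.1 (congrFun h x)

end SecondOrder

theorem stmt6_general (a c : ℝ)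
    (φ φ' φ'' v v' v'' : ℝ → ℝ)
    (hφ1 : ∀ x, HasDerivAt φ (φ' x) x) (hφ2 : ∀ x, HasDerivAt φ' (φ'' x) x)
    (hv1 : ∀ x, HasDerivAt v (v' x) x) (hv2 : ∀ x, HasDerivAt v' (v'' x) x)
    (heqφ : ∀ x, -φ'' x + a * φ x + (c / 2) * (φ x) ^ 2 * φ x
        - (3 / 16) * (φ x) ^ 4 * φ x + ((φ x * φ' x) / 2) * φ x
        - ((φ x) ^ 2 / 2) * φ' x = 0)
    (heqv : ∀ x, -v'' x + a * v x + (c / 2) * (φ x) ^ 2 * v x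
        - (3 / 16) * (φ x) ^ 4 * v x + ((φ x * φ' x) / 2) * v x
        - ((φ x) ^ 2 / 2) * v' x = 0)
    (hφ0' : Filter.Tendsto φ Filter.atBot (nhds 0))
    (hφ'0' : Filter.Tendsto φ' Filter.atBot (nhds 0))
    (hv0' : Filter.Tendsto v Filter.atBot (nhds 0))
    (hv'0' : Filter.Tendsto v' Filter.atBot (nhds 0)) :
    (∀ x, HasDerivAt (fun x => φ' x * v x - φ x * v' x)
        (-((φ x) ^ 2 / 2) * (φ' x * v x - φ x * v' x)) x) ∧
    (∀ x, φ' x * v x - φ x * v' x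
        = (φ' 0 * v 0 - φ 0 * v' 0)
            * Real.exp (-(1 / 2) * ∫ y in (0:ℝ)..x, (φ y) ^ 2)) ∧
    (∀ x, φ' x * v x - φ x * v' x = 0) ∧
    (φ ≠ 0 → ∃ k : ℝ, v = fun x => k * φ x) := by
  let q : ℝ → ℝ := fun x => a + (c / 2) * φ x ^ 2 - (3 / 16) * φ x ^ 4 + φ x * φ' x / 2
  let p : ℝ → ℝ := fun x => -(φ x ^ 2 / 2)
  have hφc : Continuous φ := continuous_iff_continuousAt.2 fun x => (hφ1 x).continuousAt
  have hφ'c : Continuous φ' := continuous_iff_continuousAt.2 fun x => (hφ2 x).continuousAt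
  have hodeφ : ∀ x, φ'' x = q x * φ x + p x * φ' x := fun x => by linear_combination -heqφ x
  have hodev : ∀ x, v'' x = q x * v x + p x * v' x := fun x => by linear_combination -heqv x
  have hW : ∀ x, HasDerivAt (fun x => φ' x * v x - φ x * v' x)
      (-((φ x) ^ 2 / 2) * (φ' x * v x - φ x * v' x)) x :=
    hasDerivAt_wronskian hφ1 hφ2 hv1 hv2 hodeφ hodev
  have hW0 : ∀ x, φ' x * v x - φ x * v' x = 0 :=
    eq_zero_of_hasDerivAt_mul_of_tendsto_atBot (fun x => neg_nonpos.2 (by positivity)) hW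
      (by simpa using (hφ'0'.mul hv0').sub (hφ0'.mul hv'0'))
  refine ⟨hW, fun x => ?_, hW0, fun hφne => ?_⟩
  · rw [eq_mul_exp_integral_of_hasDerivAt (by fun_prop) hW x, intervalIntegral.integral_neg,
      intervalIntegral.integral_div]
    ring_nf
  · obtain ⟨x₀, hx₀⟩ := Function.ne_iff.1 hφne
    exact ⟨_, eq_const_mul_of_wronskian_eq_zero (by fun_prop) (by fun_prop)
      hφ1 hφ2 hv1 hv2 hodeφ hodev hW0 hx₀⟩

/-- Wronskian argument for the linearized operator `L₋`.
If `φ, v` solve `L₋u = -u'' + a u + (c/2)φ²u - (3/16)φ⁴u + (φφ_x/2)u - (φ²/2)u_x = 0`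
and decay with their derivatives at `±∞`, then `W = φ_x v - φ v_x` verifies
`W' = -(φ²/2)W`, `W(x) = W(0)·exp(-(1/2)∫₀ˣ φ²)`, `W ≡ 0`, and `v` is a multiple
of `φ` provided `φ ≢ 0`. -/
theorem stmt6 (a c : ℝ) (ha : 0 < a)
    (φ φ' φ'' v v' v'' : ℝ → ℝ)
    (hφ1 : ∀ x, HasDerivAt φ (φ' x) x) (hφ2 : ∀ x, HasDerivAt φ' (φ'' x) x)
    (hv1 : ∀ x, HasDerivAt v (v' x) x) (hv2 : ∀ x, HasDerivAt v' (v'' x) x)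
    (heqφ : ∀ x, -φ'' x + a * φ x + (c / 2) * (φ x) ^ 2 * φ x
        - (3 / 16) * (φ x) ^ 4 * φ x + ((φ x * φ' x) / 2) * φ x
        - ((φ x) ^ 2 / 2) * φ' x = 0)
    (heqv : ∀ x, -v'' x + a * v x + (c / 2) * (φ x) ^ 2 * v x
        - (3 / 16) * (φ x) ^ 4 * v x + ((φ x * φ' x) / 2) * v x
        - ((φ x) ^ 2 / 2) * v' x = 0)
    (hφ0 : Filter.Tendsto φ Filter.atTop (nhds 0))
    (hφ0' : Filter.Tendsto φ Filter.atBot (nhds 0))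
    (hφ'0 : Filter.Tendsto φ' Filter.atTop (nhds 0))
    (hφ'0' : Filter.Tendsto φ' Filter.atBot (nhds 0))
    (hv0 : Filter.Tendsto v Filter.atTop (nhds 0))
    (hv0' : Filter.Tendsto v Filter.atBot (nhds 0))
    (hv'0 : Filter.Tendsto v' Filter.atTop (nhds 0))
    (hv'0' : Filter.Tendsto v' Filter.atBot (nhds 0)) :
    (∀ x, HasDerivAt (fun x => φ' x * v x - φ x * v' x)
        (-((φ x) ^ 2 / 2) * (φ' x * v x - φ x * v' x)) x) ∧
    (∀ x, φ' x * v x - φ x * v' x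
        = (φ' 0 * v 0 - φ 0 * v' 0)
            * Real.exp (-(1 / 2) * ∫ y in (0:ℝ)..x, (φ y) ^ 2)) ∧
    (∀ x, φ' x * v x - φ x * v' x = 0) ∧
    (φ ≠ 0 → ∃ k : ℝ, v = fun x => k * φ x) :=
  stmt6_general a c φ φ' φ'' v v' v'' hφ1 hφ2 hv1 hv2 heqφ heqv hφ0' hφ'0' hv0' hv'0'
end

section
/- Let A be a self-adjoint bounded-below operator on a real Hilbert space with exactly one simple negative eigenvalue -λ < 0 with normalized eigenvector ξ, a kernel K, and the rest of the spectrum bounded away from 0 from above. Suppose ψ = αξ + ζ + η with α ≠ 0, ζ ∈ K, η in the positive spectral subspace, satisfies ⟨Aψ, ψ⟩ < 0. Then any ε ≠ 0 orthogonal to K and satisfying ⟨Aψ, ε⟩ = 0 verifies ⟨Aε, ε⟩ > 0. -/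
open RealInnerProductSpace

/-!
Split `A` along `ℝξ ⊕ K ⊕ P`: the kernel part of `ψ` is invisible to the form `⟪A ·, ·⟫`,
and on `ℝξ ⊕ P` the form is `-λ` times the product of the `ξ`-coordinates plus the form on `P`.
Hence `⟪Aη, η⟫ < α²λ`, `⟪Aη, ρ⟫ = αβλ` and `⟪Aε, ε⟫ = -β²λ + ⟪Aρ, ρ⟫`. Cauchy–Schwarz for
the positive form on `P` gives `α²β²λ² ≤ ⟪Aη, η⟫⟪Aρ, ρ⟫ < α²λ⟪Aρ, ρ⟫`, i.e. `β²λ < ⟪Aρ, ρ⟫`.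
-/

section SymmetricOperator

variable {H : Type*} [NormedAddCommGroup H] [InnerProductSpace ℝ H] {A : H →L[ℝ] H}

theorem inner_map_sq_le_of_nonneg (hsym : ∀ x y : H, ⟪A x, y⟫ = ⟪x, A y⟫) {P : Submodule ℝ H}
    (hpos : ∀ p ∈ P, 0 ≤ ⟪A p, p⟫) {x y : H} (hx : x ∈ P) (hy : y ∈ P) :
    ⟪A x, y⟫ ^ 2 ≤ ⟪A x, x⟫ * ⟪A y, y⟫ := by
  have hdisc : discrim ⟪A y, y⟫ (2 * ⟪A x, y⟫) ⟪A x, x⟫ ≤ 0 := by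
    refine discrim_le_zero fun t => ?_
    have hexp : ⟪A (t • y + x), t • y + x⟫ = ⟪A y, y⟫ * (t * t) + 2 * ⟪A x, y⟫ * t + ⟪A x, x⟫ := by
      simp only [map_add, map_smul, inner_add_left, inner_add_right, real_inner_smul_left,
        real_inner_smul_right, hsym y x, real_inner_comm (A x) y]
      ring
    exact hexp ▸ hpos _ (P.add_mem (P.smul_mem t hy) hx)
  rw [discrim] at hdisc
  linarith

theorem inner_map_add_add_of_map_eq_zero (hsym : ∀ x y : H, ⟪A x, y⟫ = ⟪x, A y⟫) {ζ : H}
    (hζ : A ζ = 0) (x y : H) : ⟪A (x + ζ), y + ζ⟫ = ⟪A x, y⟫ := by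
  rw [map_add, hζ, add_zero, inner_add_right, hsym x ζ, hζ, inner_zero_right, add_zero]

theorem inner_map_smul_add_smul_add (hsym : ∀ x y : H, ⟪A x, y⟫ = ⟪x, A y⟫) {lam : ℝ} {ξ : H}
    (hξ : ‖ξ‖ = 1) (hAξ : A ξ = (-lam) • ξ) (a b : ℝ) {p q : H} (hp : ⟪ξ, p⟫ = 0)
    (hq : ⟪ξ, q⟫ = 0) : ⟪A (a • ξ + p), b • ξ + q⟫ = -(a * b * lam) + ⟪A p, q⟫ := by
  have hApξ : ⟪A p, ξ⟫ = 0 := by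
    rw [hsym, hAξ, real_inner_smul_right, real_inner_comm, hp, mul_zero]
  simp only [map_add, map_smul, hAξ, inner_add_left, inner_add_right, real_inner_smul_left,
    real_inner_smul_right, real_inner_self_eq_norm_sq, hξ, hq, hApξ]
  ring

end SymmetricOperator

theorem sq_mul_lt_of_sq_le_mul {lam α β a c : ℝ} (hlam : 0 < lam) (hα : α ≠ 0)
    (ha : a < α ^ 2 * lam) (hc : 0 < c) (hcs : (α * β * lam) ^ 2 ≤ a * c) :
    β ^ 2 * lam < c := by
  have hα2 : 0 < α ^ 2 * lam := by positivity
  have : α ^ 2 * lam * (β ^ 2 * lam) < α ^ 2 * lam * c :=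
    calc α ^ 2 * lam * (β ^ 2 * lam) = (α * β * lam) ^ 2 := by ring
      _ ≤ a * c := hcs
      _ < α ^ 2 * lam * c := mul_lt_mul_of_pos_right ha hc
  exact lt_of_mul_lt_mul_left this hα2.le

theorem stmt7_general {H : Type*} [NormedAddCommGroup H] [InnerProductSpace ℝ H]
    (A : H →L[ℝ] H) (hsym : ∀ x y : H, ⟪A x, y⟫ = ⟪x, A y⟫)
    (lam : ℝ) (hlam : 0 < lam) (ξ : H) (hξ : ‖ξ‖ = 1) (hAξ : A ξ = (-lam) • ξ)
    (K P : Submodule ℝ H)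
    (hK : ∀ ζ ∈ K, A ζ = 0)
    (hPposdef : ∀ p ∈ P, p ≠ 0 → 0 < ⟪A p, p⟫)
    (hξP : ∀ p ∈ P, ⟪ξ, p⟫ = 0)
    (ψ : H) (α : ℝ) (hα : α ≠ 0) (ζ : H) (hζ : ζ ∈ K) (η : H) (hη : η ∈ P)
    (hψ : ψ = α • ξ + ζ + η) (hneg : ⟪A ψ, ψ⟫ < 0)
    (ε : H) (hεne : ε ≠ 0)
    (β : ℝ) (ρ : H) (hρ : ρ ∈ P) (hε : ε = β • ξ + ρ)
    (horth : ⟪A ψ, ε⟫ = 0) :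
    0 < ⟪A ε, ε⟫ := by
  rw [add_right_comm] at hψ
  have hψψ : ⟪A ψ, ψ⟫ = -(α * α * lam) + ⟪A η, η⟫ := by
    rw [hψ, inner_map_add_add_of_map_eq_zero hsym (hK ζ hζ),
      inner_map_smul_add_smul_add hsym hξ hAξ _ _ (hξP η hη) (hξP η hη)]
  have hψε : ⟪A ψ, ε⟫ = -(α * β * lam) + ⟪A η, ρ⟫ := by
    rw [hψ, map_add, hK ζ hζ, add_zero, hε,
      inner_map_smul_add_smul_add hsym hξ hAξ _ _ (hξP η hη) (hξP ρ hρ)]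
  have hεε : ⟪A ε, ε⟫ = -(β * β * lam) + ⟪A ρ, ρ⟫ := by
    rw [hε, inner_map_smul_add_smul_add hsym hξ hAξ _ _ (hξP ρ hρ) (hξP ρ hρ)]
  have hρne : ρ ≠ 0 := by
    rintro rfl
    have hβ : β = 0 := by
      rw [inner_zero_right] at hψε
      simpa [hα, hlam.ne'] using hψε.symm.trans horth
    exact hεne (by rw [hε, hβ, zero_smul, add_zero])
  have hPpos : ∀ p ∈ P, 0 ≤ ⟪A p, p⟫ := fun p hp =>
    (eq_or_ne p 0).elim (fun h => by rw [h, inner_zero_right]) fun h => (hPposdef p hp h).le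
  have hcs : (α * β * lam) ^ 2 ≤ ⟪A η, η⟫ * ⟪A ρ, ρ⟫ := by
    rw [show α * β * lam = ⟪A η, ρ⟫ by linarith]
    exact inner_map_sq_le_of_nonneg hsym hPpos hη hρ
  have hcoeff := sq_mul_lt_of_sq_le_mul hlam hα (by rw [sq]; linarith) (hPposdef ρ hρ hρne) hcs
  rw [hεε, ← sq]
  linarith

/-- abstract positivity argument. For a symmetric operator `A`
with exactly one simple negative eigenvalue `-λ` (eigenvector `ξ`), kernel `K`
and positive spectral subspace `P`, if `ψ = αξ + ζ + η` (`α ≠ 0`, `ζ ∈ K`,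
`η ∈ P`) satisfies `⟨Aψ,ψ⟩ < 0`, then any `ε ≠ 0` orthogonal to `K`
(decomposed as `ε = βξ + ρ`, `ρ ∈ P`) with `⟨Aψ,ε⟩ = 0` satisfies
`⟨Aε,ε⟩ > 0`. -/
theorem stmt7 {H : Type*} [NormedAddCommGroup H] [InnerProductSpace ℝ H]
    (A : H →L[ℝ] H) (hsym : ∀ x y : H, ⟪A x, y⟫ = ⟪x, A y⟫)
    (lam : ℝ) (hlam : 0 < lam) (ξ : H) (hξ : ‖ξ‖ = 1) (hAξ : A ξ = (-lam) • ξ)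
    (K P : Submodule ℝ H)
    (hK : ∀ ζ ∈ K, A ζ = 0)
    (hPpos : ∀ p ∈ P, 0 ≤ ⟪A p, p⟫)
    (hPposdef : ∀ p ∈ P, p ≠ 0 → 0 < ⟪A p, p⟫)
    (hPinv : ∀ p ∈ P, A p ∈ P)
    (hξP : ∀ p ∈ P, ⟪ξ, p⟫ = 0) (hξK : ∀ ζ ∈ K, ⟪ξ, ζ⟫ = 0)
    (hKP : ∀ ζ ∈ K, ∀ p ∈ P, ⟪ζ, p⟫ = 0)
    (ψ : H) (α : ℝ) (hα : α ≠ 0) (ζ : H) (hζ : ζ ∈ K) (η : H) (hη : η ∈ P)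
    (hψ : ψ = α • ξ + ζ + η) (hneg : ⟪A ψ, ψ⟫ < 0)
    (ε : H) (hεne : ε ≠ 0) (hεK : ∀ k ∈ K, ⟪ε, k⟫ = 0)
    (β : ℝ) (ρ : H) (hρ : ρ ∈ P) (hε : ε = β • ξ + ρ)
    (horth : ⟪A ψ, ε⟫ = 0) :
    0 < ⟪A ε, ε⟫ :=
  stmt7_general A hsym lam hlam ξ hξ hAξ K P hK hPposdef hξP ψ α hα ζ hζ η hη hψ hneg ε hεne β ρ hρ
    hε horth
end

section
/- Let w ∈ H¹(ℝ;ℂ) and let h ≥ 0 be a C² bounded function on ℝ such that √h is C¹ and (h')² ≲ h. Then ∫_ℝ |w|⁶ h dx ≤ 8 (∫_{supp(h)} |w|² dx)² · (∫_ℝ |w_x|² h dx + ∫_ℝ |w|² (h')²/h dx). -/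
/-!
Put `s = √h` and `g = ‖w‖² s`. Since `g` and `g'` are integrable, `g x ≤ ∫ |g'|`, and
`|g'| ≤ 𝟙_{supp h} ‖w‖ · (2 ‖w'‖ s + ‖w‖ |s'|)`; by Cauchy–Schwarz,
`(sup g)² ≤ (∫_{supp h} ‖w‖²) · 8 (∫ ‖w'‖² h + ∫ ‖w‖² (2 s')²)`.
Finally `∫ ‖w‖⁶ h = ∫_{supp h} g² ‖w‖² ≤ (sup g)² ∫_{supp h} ‖w‖²`,
and `(2 s')² = (h')² / h`.
-/

open MeasureTheory Set Filter Topology Function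

lemma abs_le_integral_of_hasDerivAt_of_abs_le {g G F : ℝ → ℝ}
    (hg : ∀ x, HasDerivAt g (G x) x) (hgi : Integrable g) (hF : Integrable F)
    (hGF : ∀ x, |G x| ≤ F x) (x : ℝ) : |g x| ≤ ∫ y, F y := by
  have hG_eq : deriv g = G := funext fun y => (hg y).deriv
  have hGi : Integrable G :=
    hF.mono' (hG_eq ▸ (measurable_deriv g).aestronglyMeasurable) (Eventually.of_forall hGF)
  have hlim : Tendsto g atBot (𝓝 0) :=
    tendsto_zero_of_hasDerivAt_of_integrableOn_Iic (a := x) (fun y _ => hg y)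
      hGi.integrableOn hgi.integrableOn
  have hftc : ∫ y in Iic x, G y = g x := by
    simpa using integral_Iic_of_hasDerivAt_of_tendsto' (fun y _ => hg y) hGi.integrableOn hlim
  calc |g x| = |∫ y in Iic x, G y| := by rw [hftc]
    _ ≤ ∫ y in Iic x, |G y| := abs_integral_le_integral_abs
    _ ≤ ∫ y in Iic x, F y := setIntegral_mono hGi.abs.integrableOn hF.integrableOn hGF
    _ ≤ ∫ y, F y :=
      setIntegral_le_integral hF (Eventually.of_forall fun y => (abs_nonneg _).trans (hGF y))

lemma integral_mul_le_sqrt_mul_sqrt {α : Type*} [MeasurableSpace α] {μ : Measure α}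
    {f g : α → ℝ} (hf0 : ∀ x, 0 ≤ f x) (hg0 : ∀ x, 0 ≤ g x) (hf : MemLp f 2 μ)
    (hg : MemLp g 2 μ) :
    ∫ x, f x * g x ∂μ ≤ √(∫ x, f x ^ 2 ∂μ) * √(∫ x, g x ^ 2 ∂μ) := by
  have h2 : ENNReal.ofReal 2 = 2 := by norm_num
  have := integral_mul_le_Lp_mul_Lq_of_nonneg Real.HolderConjugate.two_two
    (Eventually.of_forall hf0) (Eventually.of_forall hg0) (h2 ▸ hf) (h2 ▸ hg)
  have hsq : ∀ φ : α → ℝ, (fun x => φ x ^ (2 : ℝ)) = fun x => φ x ^ 2 := fun φ =>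
    funext fun x => Real.rpow_two (φ x)
  rwa [hsq, hsq, ← Real.sqrt_eq_rpow, ← Real.sqrt_eq_rpow] at this

lemma deriv_eq_zero_of_nonneg_of_eq_zero {s : ℝ → ℝ} (hs : ∀ y, 0 ≤ s y) {x : ℝ}
    (hx : s x = 0) : deriv s x = 0 :=
  IsLocalMin.deriv_eq_zero (Eventually.of_forall fun y => hx ▸ hs y)

-- Where `s x = 0` both sides vanish: the left one through `x / 0 = 0`, the right one since `x`
-- minimizes `s`.
lemma sq_deriv_sq_div_sq {s : ℝ → ℝ} (hs : ∀ y, 0 ≤ s y) {x : ℝ}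
    (hd : DifferentiableAt ℝ s x) :
    deriv (fun y => s y ^ 2) x ^ 2 / s x ^ 2 = (2 * deriv s x) ^ 2 := by
  have hsq : deriv (fun y => s y ^ 2) x = 2 * s x * deriv s x := by
    simpa using (hd.hasDerivAt.fun_pow 2).deriv
  rcases eq_or_ne (s x) 0 with hx | hx
  · simp [hx, deriv_eq_zero_of_nonneg_of_eq_zero hs hx]
  · rw [hsq]
    field_simp

section Lp

variable {α E : Type*} [MeasurableSpace α] {μ : Measure α} [NormedAddCommGroup E]

lemma MeasureTheory.MemLp.norm_mul_of_abs_le {p : ENNReal} {f : α → E} (hf : MemLp f p μ)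
    {φ : α → ℝ} (hφ : AEStronglyMeasurable φ μ) {K : ℝ} (hφK : ∀ x, |φ x| ≤ K) :
    MemLp (fun x => ‖f x‖ * φ x) p μ :=
  hf.norm.of_le_mul (c := K) (hf.1.norm.mul hφ) <| Eventually.of_forall fun x => by
    rw [norm_mul, norm_norm, Real.norm_eq_abs, mul_comm]
    exact mul_le_mul_of_nonneg_right (hφK x) (norm_nonneg _)

lemma sq_integral_mul_two_mul_add_le {u p q : α → ℝ} (hu0 : ∀ x, 0 ≤ u x) (hp0 : ∀ x, 0 ≤ p x)
    (hq0 : ∀ x, 0 ≤ q x) (hu : MemLp u 2 μ) (hp : MemLp p 2 μ) (hq : MemLp q 2 μ) :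
    (∫ x, u x * (2 * p x + q x) ∂μ) ^ 2
      ≤ (∫ x, u x ^ 2 ∂μ) * (8 * ((∫ x, p x ^ 2 ∂μ) + ∫ x, (2 * q x) ^ 2 ∂μ)) := by
  have hv0 : ∀ x, 0 ≤ 2 * p x + q x := fun x => by linarith [hp0 x, hq0 x]
  have hv : MemLp (fun x => 2 * p x + q x) 2 μ := (hp.const_mul 2).add hq
  have hV : ∫ x, (2 * p x + q x) ^ 2 ∂μ
      ≤ 8 * ((∫ x, p x ^ 2 ∂μ) + ∫ x, (2 * q x) ^ 2 ∂μ) := by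
    rw [← integral_add hp.integrable_sq (hq.const_mul 2).integrable_sq, ← integral_const_mul]
    refine integral_mono hv.integrable_sq
      ((hp.integrable_sq.add (hq.const_mul 2).integrable_sq).const_mul 8) fun x => ?_
    nlinarith [sq_nonneg (2 * p x - q x), sq_nonneg (q x)]
  have hA0 : 0 ≤ ∫ x, u x ^ 2 ∂μ := integral_nonneg fun x => sq_nonneg _
  have hV0 : 0 ≤ ∫ x, (2 * p x + q x) ^ 2 ∂μ := integral_nonneg fun x => sq_nonneg _
  calc (∫ x, u x * (2 * p x + q x) ∂μ) ^ 2
      ≤ (√(∫ x, u x ^ 2 ∂μ) * √(∫ x, (2 * p x + q x) ^ 2 ∂μ)) ^ 2 := by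
        gcongr
        · exact integral_nonneg fun x => mul_nonneg (hu0 x) (hv0 x)
        · exact integral_mul_le_sqrt_mul_sqrt hu0 hv0 hu hv
    _ = (∫ x, u x ^ 2 ∂μ) * ∫ x, (2 * p x + q x) ^ 2 ∂μ := by
      rw [mul_pow, Real.sq_sqrt hA0, Real.sq_sqrt hV0]
    _ ≤ _ := by gcongr

lemma integral_norm_pow_six_mul_sq_le_of_le {w : α → E} {s : α → ℝ} (hw : MemLp w 2 μ)
    (hs : Measurable s) (hs0 : ∀ x, 0 ≤ s x) {S : ℝ} (hS : ∀ x, ‖w x‖ ^ 2 * s x ≤ S) :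
    ∫ x, ‖w x‖ ^ 6 * s x ^ 2 ∂μ ≤ S ^ 2 * ∫ x in support s, ‖w x‖ ^ 2 ∂μ := by
  have hmeas : MeasurableSet (support s) := measurableSet_support hs
  rw [← integral_const_mul, ← integral_indicator hmeas]
  refine integral_mono_of_nonneg (Eventually.of_forall fun x => by positivity)
    ((((memLp_two_iff_integrable_sq_norm hw.1).1 hw).const_mul _).indicator hmeas)
    (Eventually.of_forall fun x => ?_)
  by_cases hx : x ∈ support s
  · calc ‖w x‖ ^ 6 * s x ^ 2 = (‖w x‖ ^ 2 * s x) ^ 2 * ‖w x‖ ^ 2 := by ring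
      _ ≤ S ^ 2 * ‖w x‖ ^ 2 := by
        gcongr
        exacts [mul_nonneg (sq_nonneg _) (hs0 x), hS x]
      _ = _ := (indicator_of_mem hx (fun y => S ^ 2 * ‖w y‖ ^ 2)).symm
  · simp [notMem_support.mp hx]

end Lp

section InnerProductSpace

variable {E : Type*} [NormedAddCommGroup E] [InnerProductSpace ℝ E]

lemma abs_inner_mul_add_norm_sq_mul_le (w w' : ℝ → E) {s : ℝ → ℝ} (hs : ∀ y, 0 ≤ s y)
    (x : ℝ) :
    |2 * inner ℝ (w x) (w' x) * s x + ‖w x‖ ^ 2 * deriv s x|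
      ≤ (support s).indicator (‖w ·‖) x * (2 * (‖w' x‖ * s x) + ‖w x‖ * |deriv s x|) := by
  by_cases hx : x ∈ support s
  · rw [indicator_of_mem hx]
    calc |2 * inner ℝ (w x) (w' x) * s x + ‖w x‖ ^ 2 * deriv s x|
        ≤ 2 * |inner ℝ (w x) (w' x)| * s x + ‖w x‖ ^ 2 * |deriv s x| := by
          refine (abs_add_le _ _).trans_eq ?_
          rw [abs_mul, abs_mul, abs_mul, abs_two, abs_of_nonneg (hs x),
            abs_of_nonneg (sq_nonneg ‖w x‖)]
      _ ≤ 2 * (‖w x‖ * ‖w' x‖) * s x + ‖w x‖ ^ 2 * |deriv s x| := by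
          gcongr
          exacts [hs x, abs_real_inner_le_norm _ _]
      _ = ‖w x‖ * (2 * (‖w' x‖ * s x) + ‖w x‖ * |deriv s x|) := by ring
  · have hsx : s x = 0 := notMem_support.mp hx
    simp [hsx, deriv_eq_zero_of_nonneg_of_eq_zero hs hsx]

theorem integral_norm_pow_six_mul_sq_le (w w' : ℝ → E) (s : ℝ → ℝ)
    (hw : ∀ x, HasDerivAt w (w' x) x) (hw2 : MemLp w 2 volume) (hw'2 : MemLp w' 2 volume)
    (hs0 : ∀ x, 0 ≤ s x) (hs : Differentiable ℝ s) {M K : ℝ} (hsM : ∀ x, s x ≤ M)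
    (hs'K : ∀ x, |deriv s x| ≤ K) :
    ∫ x, ‖w x‖ ^ 6 * s x ^ 2 ≤ 8 * (∫ x in support s, ‖w x‖ ^ 2) ^ 2 *
        ((∫ x, ‖w' x‖ ^ 2 * s x ^ 2) + ∫ x, ‖w x‖ ^ 2 * (2 * deriv s x) ^ 2) := by
  set u : ℝ → ℝ := (support s).indicator (‖w ·‖)
  set p : ℝ → ℝ := fun x => ‖w' x‖ * s x
  set q : ℝ → ℝ := fun x => ‖w x‖ * |deriv s x|
  have hs_meas : AEStronglyMeasurable s := hs.continuous.aestronglyMeasurable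
  have hsM' : ∀ x, |s x| ≤ M := fun x => by rw [abs_of_nonneg (hs0 x)]; exact hsM x
  have hu : MemLp u 2 volume :=
    hw2.norm.indicator (measurableSet_support hs.continuous.measurable)
  have hp : MemLp p 2 volume := hw'2.norm_mul_of_abs_le hs_meas hsM'
  have hq : MemLp q 2 volume := hw2.norm_mul_of_abs_le
    (measurable_deriv s).abs.aestronglyMeasurable fun x => (abs_abs _).trans_le (hs'K x)
  have hgi : Integrable (fun x => ‖w x‖ ^ 2 * s x) := by
    simpa only [Pi.mul_def, sq, mul_assoc] using
      hw2.norm.integrable_mul (hw2.norm_mul_of_abs_le hs_meas hsM')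
  have hu0 : ∀ x, 0 ≤ u x := indicator_nonneg fun _ _ => norm_nonneg _
  have hp0 : ∀ x, 0 ≤ p x := fun x => mul_nonneg (norm_nonneg _) (hs0 x)
  have hq0 : ∀ x, 0 ≤ q x := fun x => mul_nonneg (norm_nonneg _) (abs_nonneg _)
  set S := ∫ x, u x * (2 * p x + q x)
  have hgS : ∀ x, ‖w x‖ ^ 2 * s x ≤ S := fun x =>
    (le_abs_self _).trans (abs_le_integral_of_hasDerivAt_of_abs_le
      (F := fun y => u y * (2 * p y + q y)) (fun y => (hw y).norm_sq.mul (hs y).hasDerivAt) hgi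
      (hu.integrable_mul ((hp.const_mul 2).add hq)) (abs_inner_mul_add_norm_sq_mul_le w w' hs0) x)
  have hA : ∫ x, u x ^ 2 = ∫ x in support s, ‖w x‖ ^ 2 := by
    rw [← integral_indicator (measurableSet_support hs.continuous.measurable)]
    congr with x
    by_cases hx : x ∈ support s <;> simp [u, hx]
  have hp2 : ∫ x, p x ^ 2 = ∫ x, ‖w' x‖ ^ 2 * s x ^ 2 := by simp only [p, mul_pow]
  have hq2 : ∫ x, (2 * q x) ^ 2 = ∫ x, ‖w x‖ ^ 2 * (2 * deriv s x) ^ 2 := by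
    congr with x
    simp only [q, mul_pow, sq_abs]
    ring
  calc ∫ x, ‖w x‖ ^ 6 * s x ^ 2 ≤ S ^ 2 * ∫ x in support s, ‖w x‖ ^ 2 :=
        integral_norm_pow_six_mul_sq_le_of_le hw2 hs.continuous.measurable hs0 hgS
    _ ≤ (∫ x in support s, ‖w x‖ ^ 2) * (8 * ((∫ x, p x ^ 2) + ∫ x, (2 * q x) ^ 2)) *
          ∫ x in support s, ‖w x‖ ^ 2 := by
        rw [← hA]
        exact mul_le_mul_of_nonneg_right (sq_integral_mul_two_mul_add_le hu0 hp0 hq0 hu hp hq)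
          (integral_nonneg fun x => sq_nonneg _)
    _ = _ := by rw [hp2, hq2]; ring

end InnerProductSpace

lemma sq_deriv_div_le_of_sq_deriv_le_mul {h : ℝ → ℝ} (hpos : ∀ x, 0 ≤ h x) {C : ℝ}
    (hC : ∀ x, deriv h x ^ 2 ≤ C * h x) (x : ℝ) : deriv h x ^ 2 / h x ≤ max C 0 := by
  rcases (hpos x).eq_or_lt with hx | hx
  · rw [← hx, div_zero]
    exact le_max_right _ _
  · rw [div_le_iff₀ hx]
    exact (hC x).trans (mul_le_mul_of_nonneg_right (le_max_left _ _) hx.le)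

theorem stmt8_general (w w' : ℝ → ℂ) (h : ℝ → ℝ)
    (hw : ∀ x, HasDerivAt w (w' x) x)
    (hw2 : MemLp w 2 volume) (hw'2 : MemLp w' 2 volume)
    (hbd : ∃ M, ∀ x, h x ≤ M) (hpos : ∀ x, 0 ≤ h x)
    (hsqrt : ContDiff ℝ 1 (fun x => Real.sqrt (h x)))
    (hquot : ∃ C, ∀ x, (deriv h x) ^ 2 ≤ C * h x) :
    (∫ x, ‖w x‖ ^ 6 * h x)
      ≤ 8 * (∫ x in Function.support h, ‖w x‖ ^ 2) ^ 2 *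
          ((∫ x, ‖w' x‖ ^ 2 * h x) + ∫ x, ‖w x‖ ^ 2 * ((deriv h x) ^ 2 / h x)) := by
  obtain ⟨M, hM⟩ := hbd
  obtain ⟨C, hC⟩ := hquot
  set s : ℝ → ℝ := fun x => √(h x)
  have hs0 : ∀ x, 0 ≤ s x := fun x => Real.sqrt_nonneg _
  have hs : Differentiable ℝ s := hsqrt.differentiable one_ne_zero
  have hsq : ∀ x, s x ^ 2 = h x := fun x => Real.sq_sqrt (hpos x)
  have hh : h = fun x => s x ^ 2 := funext fun x => (hsq x).symm
  have hquot_eq : ∀ x, deriv h x ^ 2 / h x = (2 * deriv s x) ^ 2 := fun x => by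
    rw [hh]
    exact sq_deriv_sq_div_sq hs0 (hs x)
  have hsupp : support s = support h := by
    ext x
    simp [s, Real.sqrt_eq_zero (hpos x)]
  have hs'K : ∀ x, |deriv s x| ≤ √(max C 0) := fun x => by
    have := Real.abs_le_sqrt <|
      (hquot_eq x).symm.le.trans (sq_deriv_div_le_of_sq_deriv_le_mul hpos hC x)
    rw [abs_mul, abs_two] at this
    linarith [abs_nonneg (deriv s x)]
  have key := integral_norm_pow_six_mul_sq_le w w' s hw hw2 hw'2 hs0 hs
    (fun x => Real.sqrt_le_sqrt (hM x)) hs'K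
  simpa only [hsq, hsupp, ← hquot_eq] using key

/-- localized Gagliardo–Nirenberg type inequality. For `w ∈ H¹(ℝ;ℂ)`
and `h ≥ 0` a `C²` bounded function with `√h` of class `C¹` and `(h')² ≲ h`,
`∫ |w|⁶ h ≤ 8 (∫_{supp h} |w|²)² (∫ |w_x|² h + ∫ |w|² (h')²/h)`. -/
theorem stmt8 (w w' : ℝ → ℂ) (h : ℝ → ℝ)
    (hw : ∀ x, HasDerivAt w (w' x) x)
    (hw2 : MemLp w 2 volume) (hw'2 : MemLp w' 2 volume)
    (hC2 : ContDiff ℝ 2 h) (hbd : ∃ M, ∀ x, h x ≤ M) (hpos : ∀ x, 0 ≤ h x)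
    (hsqrt : ContDiff ℝ 1 (fun x => Real.sqrt (h x)))
    (hquot : ∃ C, ∀ x, (deriv h x) ^ 2 ≤ C * h x) :
    (∫ x, ‖w x‖ ^ 6 * h x)
      ≤ 8 * (∫ x in Function.support h, ‖w x‖ ^ 2) ^ 2 *
          ((∫ x, ‖w' x‖ ^ 2 * h x) + ∫ x, ‖w x‖ ^ 2 * ((deriv h x) ^ 2 / h x)) :=
  stmt8_general w w' h hw hw2 hw'2 hbd hpos hsqrt hquot
end
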